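/- arXiv:2206.02990 — 3 statements merged into one kernel-verified Lean document; each statement's English description precedes it below -/
import Mathlib

section
/- Let P₀ and Q be probability measures on a measurable space and let α₀ ∈ (0,1). Then Q belongs to the sub-population set P_{α₀}(P₀) — i.e., there exist α ∈ [α₀, 1) and a probability measure Q₀ absolutely continuous with respect to P₀ such that P₀ = α • Q + (1−α) • Q₀ — if and only if α₀ • Q ≤ P₀ (as measures). -/
open MeasureTheory

noncomputable def subPopSet {X : Type*} [MeasurableSpace X] (P₀ : Measure X) (α₀ : ℝ) :
    Set (Measure X) :=
  {Q | ∃ α : ℝ, α₀ ≤ α ∧ α < 1 ∧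
    ∃ Q₀ : Measure X, IsProbabilityMeasure Q₀ ∧ Q₀ ≪ P₀ ∧
      P₀ = ENNReal.ofReal α • Q + ENNReal.ofReal (1 - α) • Q₀}

/-- A probability measure `Q` lies in the sub-population set `P_{α₀}(P₀)` iff
`α₀ • Q ≤ P₀` as measures. -/
theorem mem_subPopSet_iff_smul_le
    {X : Type*} [MeasurableSpace X] (P₀ Q : Measure X)
    [IsProbabilityMeasure P₀] [IsProbabilityMeasure Q]
    (α₀ : ℝ) (h0 : 0 < α₀) (h1 : α₀ < 1) :
    Q ∈ subPopSet P₀ α₀ ↔ ENNReal.ofReal α₀ • Q ≤ P₀ := by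
  constructor
  · rintro ⟨α, hα₀, hα1, Q₀, hprob, hac, hP⟩
    rw [hP]
    intro s
    simp only [Measure.coe_add, Measure.coe_smul, Pi.add_apply, Pi.smul_apply,
      smul_eq_mul]
    calc ENNReal.ofReal α₀ * Q s ≤ ENNReal.ofReal α * Q s := by
          exact mul_le_mul_left (ENNReal.ofReal_le_ofReal hα₀) _
      _ ≤ ENNReal.ofReal α * Q s + ENNReal.ofReal (1 - α) * Q₀ s := le_self_add
  · intro hle
    haveI : IsFiniteMeasure (ENNReal.ofReal α₀ • Q) :=
      ⟨by simp [ENNReal.ofReal_lt_top]⟩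
    have hne : ENNReal.ofReal (1 - α₀) ≠ 0 :=
      (ENNReal.ofReal_pos.mpr (by linarith)).ne'
    refine ⟨α₀, le_refl _, h1, (ENNReal.ofReal (1 - α₀))⁻¹ • (P₀ - ENNReal.ofReal α₀ • Q),
      ?_, ?_, ?_⟩
    · have hsub : (P₀ - ENNReal.ofReal α₀ • Q) Set.univ = ENNReal.ofReal (1 - α₀) := by
        rw [Measure.sub_apply MeasurableSet.univ hle]
        simp [ENNReal.ofReal_sub _ h0.le]
      constructor
      rw [Measure.smul_apply, smul_eq_mul, hsub]
      rw [ENNReal.inv_mul_cancel]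
      · exact hne
      · exact ENNReal.ofReal_ne_top
    · intro s hs
      have h2 : (P₀ - ENNReal.ofReal α₀ • Q) s ≤ P₀ s :=
        Measure.sub_le (μ := P₀) (ν := ENNReal.ofReal α₀ • Q) s
      have h3 : (P₀ - ENNReal.ofReal α₀ • Q) s = 0 :=
        le_antisymm (hs ▸ h2) zero_le
      simp [Measure.smul_apply, h3]
    · rw [smul_smul, ENNReal.mul_inv_cancel, one_smul]
      · rw [add_comm, Measure.sub_add_cancel_of_le hle]
      · exact hne
      · exact ENNReal.ofReal_ne_top
end

section
/- Let n ≥ 1, let P₀ be the uniform probability measure on Fin n, let α₀ ∈ (0,1), and let w : Fin n → ℝ with w_i ≥ 0 for all i and Σ_i w_i = 1. Define Q = Σ_i w_i • δ_i, the probability measure on Fin n with weights w. Then Q ∈ P_{α₀}(P₀) if and only if w_i ≤ 1/(α₀ n) for every i. -/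
open MeasureTheory ENNReal

lemma sum_smul_dirac_apply {n : ℕ} (c : Fin n → ℝ) (a : Fin n) :
    (∑ i, ENNReal.ofReal (c i) • Measure.dirac i) ({a} : Set (Fin n)) =
      ENNReal.ofReal (c a) := by
  rw [Measure.finset_sum_apply]
  simp only [Measure.smul_apply, smul_eq_mul, Measure.dirac_apply]
  rw [Finset.sum_eq_single a]
  · simp
  · intro b _ hb
    simp [Set.indicator_of_notMem, hb]
  · simp

/-- For `P₀` the uniform measure on `Fin n` and `Q = Σ_i w_i • δ_i` a weighted empirical
measure with `w_i ≥ 0` and `Σ_i w_i = 1`, we have `Q ∈ P_{α₀}(P₀)` iff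
`w_i ≤ 1/(α₀ n)` for every `i`. -/
theorem weighted_empirical_mem_subPopSet_iff
    (n : ℕ) (hn : 1 ≤ n) (α₀ : ℝ) (h0 : 0 < α₀) (h1 : α₀ < 1)
    (w : Fin n → ℝ) (hw : ∀ i, 0 ≤ w i) (hsum : ∑ i, w i = 1) :
    (∑ i, ENNReal.ofReal (w i) • Measure.dirac i) ∈
        subPopSet (((n : ℝ≥0∞))⁻¹ • (Measure.count : Measure (Fin n))) α₀ ↔
      ∀ i, w i ≤ 1 / (α₀ * n) := by
  have hnR : (0:ℝ) < n := by exact_mod_cast hn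
  have hinv : ((n : ℝ≥0∞))⁻¹ = ENNReal.ofReal (1 / n) := by
    rw [one_div, ENNReal.ofReal_inv_of_pos hnR, ENNReal.ofReal_natCast]
  have hP0 : ∀ a : Fin n,
      ((((n : ℝ≥0∞))⁻¹ • (Measure.count : Measure (Fin n)))) ({a} : Set (Fin n))
        = ENNReal.ofReal (1 / n) := by
    intro a
    rw [Measure.smul_apply, Measure.count_singleton, smul_eq_mul, mul_one, hinv]
  constructor
  · rintro ⟨α, hα₀, hα1, Q₀, hQprob, _, heq⟩ i
    have h := congrArg (fun μ : Measure (Fin n) => μ ({i} : Set (Fin n))) heq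
    simp only [Measure.add_apply, Measure.smul_apply, smul_eq_mul,
      sum_smul_dirac_apply, hP0] at h
    have hle : ENNReal.ofReal α * ENNReal.ofReal (w i) ≤ ENNReal.ofReal (1 / n) := by
      rw [h]; exact le_self_add
    rw [← ENNReal.ofReal_mul (le_trans h0.le hα₀)] at hle
    have hle' : α * w i ≤ 1 / n :=
      (ENNReal.ofReal_le_ofReal_iff (by positivity)).mp hle
    rw [le_div_iff₀ (by positivity)]
    have : α₀ * w i ≤ α * w i := by nlinarith [hw i]
    calc w i * (α₀ * n) = (α₀ * w i) * n := by ring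
      _ ≤ (α * w i) * n := by nlinarith
      _ ≤ (1 / n) * n := by nlinarith
      _ = 1 := by field_simp
  · intro hwle
    set v : Fin n → ℝ := fun i => (1 / n - α₀ * w i) / (1 - α₀) with hv
    have h1α : (0:ℝ) < 1 - α₀ := by linarith
    have hvnn : ∀ i, 0 ≤ v i := by
      intro i
      have : α₀ * w i ≤ 1 / n := by
        have := hwle i
        rw [le_div_iff₀ (by positivity)] at this
        rw [le_div_iff₀ hnR]
        nlinarith
      exact div_nonneg (by linarith) h1α.le
    refine ⟨α₀, le_refl _, h1, ∑ i, ENNReal.ofReal (v i) • Measure.dirac i, ?_, ?_, ?_⟩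
    · constructor
      rw [Measure.finset_sum_apply]
      simp only [Measure.smul_apply, smul_eq_mul, measure_univ, mul_one]
      rw [← ENNReal.ofReal_sum_of_nonneg (fun i _ => hvnn i)]
      have : ∑ i, v i = 1 := by
        simp only [hv]
        rw [← Finset.sum_div, Finset.sum_sub_distrib, ← Finset.mul_sum, hsum]
        simp only [Finset.sum_const, Finset.card_univ, Fintype.card_fin, nsmul_eq_mul, mul_one]
        field_simp
      rw [this, ENNReal.ofReal_one]
    · intro s hs
      have hne : s = ∅ := by
        rw [Measure.smul_apply, smul_eq_mul, mul_eq_zero] at hs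
        rcases hs with h | h
        · exact absurd h (by simp [hnR.ne'])
        · exact Measure.count_eq_zero_iff.mp h
      simp [hne]
    · rw [Measure.ext_iff_singleton]
      intro a
      rw [hP0]
      simp only [Measure.add_apply, Measure.smul_apply, smul_eq_mul, sum_smul_dirac_apply]
      rw [← ENNReal.ofReal_mul h0.le, ← ENNReal.ofReal_mul h1α.le,
        ← ENNReal.ofReal_add (mul_nonneg h0.le (hw a)) (mul_nonneg h1α.le (hvnn a))]
      congr 1
      simp only [hv]
      field_simp
      ring
end

section
/- Let Ψ be a real d_x × n matrix, Υ a real d_y × n matrix, λ > 0, and let H be an n × n real diagonal matrix with nonnegative diagonal entries. Set K_x = ΨᵀΨ and K_y = ΥᵀΥ, let C = Υ (K_x + λI)⁻¹ Ψᵀ and C^w = Υ H (H K_x H + λI)⁻¹ (Ψ H)ᵀ (both shifted matrices are invertible since K_x and H K_x H are positive semidefinite and λ > 0). Then Tr((C^w)ᵀ C^w) − 2·Tr(Cᵀ C^w) = Tr( ( H (H K_x H + λI)⁻¹ H − 2·(K_x + λI)⁻¹ ) K_y H (H K_x H + λI)⁻¹ H K_x ). -/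
open Matrix

/-- The `w`-dependent part of the squared empirical CMMD:
`Tr((C^w)ᵀ C^w) − 2 Tr(Cᵀ C^w)
  = Tr((H (H K_x H + λI)⁻¹ H − 2 (K_x + λI)⁻¹) K_y H (H K_x H + λI)⁻¹ H K_x)`,
for `C = Υ (K_x + λI)⁻¹ Ψᵀ` and `C^w = Υ H (H K_x H + λI)⁻¹ (Ψ H)ᵀ`, where `H` is
diagonal with nonnegative entries, `K_x = ΨᵀΨ`, `K_y = ΥᵀΥ`. -/
theorem trace_cmmd_objective
    {dx dy n : ℕ} (Ψ : Matrix (Fin dx) (Fin n) ℝ) (Υ : Matrix (Fin dy) (Fin n) ℝ)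
    (lam : ℝ) (hlam : 0 < lam)
    (H : Matrix (Fin n) (Fin n) ℝ) (hH : H.IsDiag) (hHpos : ∀ i, 0 ≤ H i i)
    (Kx Ky : Matrix (Fin n) (Fin n) ℝ) (C Cw : Matrix (Fin dy) (Fin dx) ℝ)
    (hKx : Kx = Ψᵀ * Ψ) (hKy : Ky = Υᵀ * Υ)
    (hC : C = Υ * (Kx + lam • 1)⁻¹ * Ψᵀ)
    (hCw : Cw = Υ * H * (H * Kx * H + lam • 1)⁻¹ * (Ψ * H)ᵀ) :
    (Cwᵀ * Cw).trace - 2 * (Cᵀ * Cw).trace =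
      ((H * (H * Kx * H + lam • 1)⁻¹ * H - (2 : ℝ) • (Kx + lam • 1)⁻¹) *
        Ky * H * (H * Kx * H + lam • 1)⁻¹ * H * Kx).trace := by
  have hHs : Hᵀ = H := hH.isSymm
  have hKs : Kxᵀ = Kx := by simp [hKx, Matrix.transpose_mul]
  set A := (H * Kx * H + lam • 1)⁻¹ with hAdef
  set B := (Kx + lam • 1)⁻¹ with hBdef
  have hA : Aᵀ = A := by
    rw [hAdef, Matrix.transpose_nonsing_inv]
    congr 1
    simp [Matrix.transpose_add, Matrix.transpose_mul, hHs, hKs, Matrix.mul_assoc]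
  have hB : Bᵀ = B := by
    rw [hBdef, Matrix.transpose_nonsing_inv]
    congr 1
    simp [Matrix.transpose_add, hKs]
  have cyc : ∀ (X : Matrix (Fin n) (Fin n) ℝ),
      (Ψ * X * Ψᵀ).trace = (X * Kx).trace := by
    intro X
    rw [Matrix.trace_mul_comm, ← Matrix.mul_assoc, hKx, Matrix.trace_mul_comm]
  have e1 : Cwᵀ * Cw = Ψ * (H * A * H * Ky * H * A * H) * Ψᵀ := by
    rw [hCw, hKy]
    simp only [Matrix.transpose_mul, Matrix.transpose_transpose, hA, hHs, Matrix.mul_assoc]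
  have e2 : Cᵀ * Cw = Ψ * (B * Ky * H * A * H) * Ψᵀ := by
    rw [hC, hCw, hKy]
    simp only [Matrix.transpose_mul, Matrix.transpose_transpose, hA, hB, hHs, Matrix.mul_assoc]
  rw [e1, e2, cyc, cyc]
  simp only [Matrix.sub_mul, Matrix.smul_mul, Matrix.trace_sub, Matrix.trace_smul,
    Matrix.mul_assoc, smul_eq_mul]
end
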